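/- Chain rule inequality for semantic entropies with two variables: H_s(Ũ) + H_s(Ṽ|U) ≤ H_s(Ũ,Ṽ) ≤ H(V) + H_s(Ũ|V) ≤ H(U,V), where H_s(Ṽ|U) = -∑_u ∑_j p(u) P(V_j|u) log₂ P(V_j|u) with P(V_j|u) = ∑_{v∈V_j} p(v|u). -/

import Mathlib

open Finset

/-- Probability of the block of index `i` under the partition induced by `blk`. -/
noncomputable def blockProb {U B : Type*} [Fintype U] [DecidableEq B]
    (p : U → ℝ) (blk : U → B) (i : B) : ℝ :=
  ∑ u : U, if blk u = i then p u else 0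

/-- Semantic entropy: entropy of the block probabilities. -/
noncomputable def semEntropy {U B : Type*} [Fintype U] [Fintype B] [DecidableEq B]
    (p : U → ℝ) (blk : U → B) : ℝ :=
  -∑ i : B, blockProb p blk i * Real.logb 2 (blockProb p blk i)

/-- Shannon entropy of a pmf on a finite alphabet (base 2, convention 0·log 0 = 0). -/
noncomputable def shannonEntropy {U : Type*} [Fintype U] (p : U → ℝ) : ℝ :=
  -∑ u : U, p u * Real.logb 2 (p u)

/-- Semantic conditional entropy `H_s(Ṽ|U)` of the semantic variable induced by the
partition `blkV` of `V`, conditioned on the syntactic variable `U`, for the joint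
pmf `p` on `U × V`. -/
noncomputable def condSemEntropy {U V J : Type*} [Fintype U] [Fintype V] [Fintype J]
    [DecidableEq J] (p : U × V → ℝ) (blkV : V → J) : ℝ :=
  -∑ u : U, ∑ j : J,
    (∑ v : V, if blkV v = j then p (u, v) else 0) *
      Real.logb 2 ((∑ v : V, if blkV v = j then p (u, v) else 0) / (∑ v : V, p (u, v)))

/-!
Every semantic entropy is the Shannon entropy of a pushforward pmf (`blockProb`), and the chain
rule `H(A) + H(B̃|A) = H(A, B̃)` turns the second and third inequalities into the fact that merging
atoms of a pmf cannot increase its entropy, since `∑ aₖ log aₖ ≤ (∑ aₖ) log (∑ aₖ)`. By the same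
chain rule the first inequality says `H(Ṽ|U) ≤ H(Ṽ|Ũ)`: coarsening the conditioning variable
cannot decrease conditional entropy, which is the log-sum inequality applied on each block `Uᵢ`.
-/

section LogInequalities

variable {ι : Type*} {β : ℝ}

lemma mul_logb_le_mul_logb_div_add (hβ : 1 < β) {a b c : ℝ} (ha : 0 ≤ a) (hb : 0 ≤ b)
    (hab : 0 < a → 0 < b) (hc : 0 < c) :
    a * Real.logb β c ≤ a * Real.logb β (a / b) + (c * b - a) / Real.log β := by
  have hlogβ : 0 < Real.log β := Real.log_pos hβ
  rcases ha.eq_or_lt with rfl | ha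
  · simp only [zero_mul, zero_div, sub_zero, zero_add]
    positivity
  have hb := hab ha
  have key : a * Real.log c ≤ a * Real.log (a / b) + (c * b - a) := by
    have h := Real.log_le_sub_one_of_pos (show 0 < c * b / a by positivity)
    rw [Real.log_div (by positivity) ha.ne', Real.log_mul hc.ne' hb.ne'] at h
    rw [Real.log_div ha.ne' hb.ne']
    have := mul_le_mul_of_nonneg_left h ha.le
    field_simp at this
    linarith
  simp only [Real.logb, ← mul_div_assoc, ← add_div]
  exact div_le_div_of_nonneg_right key hlogβ.le

/-- The log-sum inequality. -/
lemma sum_mul_logb_div_le (hβ : 1 < β) (s : Finset ι) {a b : ι → ℝ} (ha : ∀ k ∈ s, 0 ≤ a k)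
    (hb : ∀ k ∈ s, 0 ≤ b k) (hab : ∀ k ∈ s, 0 < a k → 0 < b k) :
    (∑ k ∈ s, a k) * Real.logb β ((∑ k ∈ s, a k) / ∑ k ∈ s, b k) ≤
      ∑ k ∈ s, a k * Real.logb β (a k / b k) := by
  set A := ∑ k ∈ s, a k
  set B := ∑ k ∈ s, b k
  have hA0 : 0 ≤ A := sum_nonneg ha
  rcases hA0.eq_or_lt with hA | hA
  · rw [← hA, zero_mul]
    exact sum_nonneg fun k hk => by
      rw [(sum_eq_zero_iff_of_nonneg ha).1 hA.symm k hk, zero_mul]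
  have hB : 0 < B := by
    obtain ⟨k, hk, hak⟩ := exists_lt_of_sum_lt (by simpa using hA : ∑ k ∈ s, (0 : ℝ) < A)
    exact sum_pos' hb ⟨k, hk, hab k hk hak⟩
  have hAB : A / B * B - A = 0 := by field_simp; ring
  calc A * Real.logb β (A / B)
      ≤ ∑ k ∈ s, (a k * Real.logb β (a k / b k) + (A / B * b k - a k) / Real.log β) := by
        rw [sum_mul]
        exact sum_le_sum fun k hk => mul_logb_le_mul_logb_div_add hβ (ha k hk) (hb k hk)
          (hab k hk) (by positivity)
    _ = ∑ k ∈ s, a k * Real.logb β (a k / b k) := by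
        rw [sum_add_distrib, ← sum_div, sum_sub_distrib, ← mul_sum, hAB, zero_div, add_zero]

lemma sum_mul_logb_le (hβ : 1 < β) (s : Finset ι) {a : ι → ℝ} (ha : ∀ k ∈ s, 0 ≤ a k) :
    ∑ k ∈ s, a k * Real.logb β (a k) ≤ (∑ k ∈ s, a k) * Real.logb β (∑ k ∈ s, a k) := by
  rw [sum_mul]
  refine sum_le_sum fun k hk => ?_
  rcases (ha k hk).eq_or_lt with h | h
  · simp [← h]
  · exact mul_le_mul_of_nonneg_left (Real.logb_le_logb_of_le hβ h (single_le_sum ha hk)) h.le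

lemma sum_mul_logb_div_sum (s : Finset ι) {a : ι → ℝ} (ha : ∀ k ∈ s, 0 ≤ a k) :
    ∑ k ∈ s, a k * Real.logb β (a k / ∑ l ∈ s, a l) =
      ∑ k ∈ s, a k * Real.logb β (a k) - (∑ k ∈ s, a k) * Real.logb β (∑ k ∈ s, a k) := by
  rw [sum_mul, ← sum_sub_distrib]
  refine sum_congr rfl fun k hk => ?_
  rcases (ha k hk).eq_or_lt with h | h
  · simp [← h]
  · rw [Real.logb_div h.ne' (h.trans_le (single_le_sum ha hk)).ne', mul_sub]

end LogInequalities

section Pushforward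

variable {α I J : Type*} [Fintype α] [DecidableEq I]

lemma blockProb_eq_sum_filter (p : α → ℝ) (f : α → I) (i : I) :
    blockProb p f i = ∑ a with f a = i, p a :=
  (sum_filter _ _).symm

lemma blockProb_nonneg {p : α → ℝ} (hp : ∀ a, 0 ≤ p a) (f : α → I) (i : I) :
    0 ≤ blockProb p f i :=
  sum_nonneg fun a _ => by split_ifs <;> simp [hp a]

lemma blockProb_comp [Fintype I] [DecidableEq J] (p : α → ℝ) (f : α → I) (g : I → J) :
    blockProb p (fun a => g (f a)) = blockProb (blockProb p f) g := by
  ext j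
  simp only [blockProb, ite_sum_zero]
  rw [sum_comm]
  refine sum_congr rfl fun a _ => ?_
  rw [sum_eq_single (f a) (fun i _ hi => by simp [Ne.symm hi]) (by simp)]
  simp

lemma blockProb_fst {β : Type*} [Fintype β] [DecidableEq α] (q : α × β → ℝ) (a : α) :
    blockProb q Prod.fst a = ∑ b, q (a, b) := by
  rw [blockProb, Fintype.sum_prod_type, sum_eq_single a (fun x _ hx => by simp [hx]) (by simp)]
  simp

lemma blockProb_comp_equiv {β : Type*} [Fintype β] (e : β ≃ α) (p : α → ℝ) (f : α → I) :
    blockProb (fun b => p (e b)) (fun b => f (e b)) = blockProb p f := by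
  ext i
  exact e.sum_comp fun a => if f a = i then p a else 0

lemma sum_blockProb_prod [Fintype I] [Fintype J] [DecidableEq J] (p : α → ℝ) (h : α → I × J)
    (i : I) : ∑ j, blockProb p h (i, j) = blockProb p (fun a => (h a).1) i := by
  rw [← blockProb_fst, ← blockProb_comp]

end Pushforward

section Entropy

variable {α β I J : Type*} [Fintype α] [Fintype β]

lemma semEntropy_eq_shannonEntropy [Fintype I] [DecidableEq I] (p : α → ℝ) (f : α → I) :
    semEntropy p f = shannonEntropy (blockProb p f) :=
  rfl

lemma shannonEntropy_comp_equiv (e : β ≃ α) (p : α → ℝ) :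
    shannonEntropy (fun b => p (e b)) = shannonEntropy p := by
  rw [shannonEntropy, shannonEntropy, e.sum_comp fun a => p a * Real.logb 2 (p a)]

lemma shannonEntropy_blockProb_le [Fintype I] [DecidableEq I] {p : α → ℝ} (hp : ∀ a, 0 ≤ p a)
    (f : α → I) : shannonEntropy (blockProb p f) ≤ shannonEntropy p := by
  rw [shannonEntropy, shannonEntropy, neg_le_neg_iff, ← sum_fiberwise univ f]
  refine sum_le_sum fun i _ => ?_
  rw [blockProb_eq_sum_filter]
  exact sum_mul_logb_le one_lt_two _ fun a _ => hp a

lemma semEntropy_comp_le [Fintype I] [DecidableEq I] [Fintype J] [DecidableEq J] {p : α → ℝ}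
    (hp : ∀ a, 0 ≤ p a) (f : α → I) (g : I → J) :
    semEntropy p (fun a => g (f a)) ≤ semEntropy p f := by
  rw [semEntropy_eq_shannonEntropy, blockProb_comp]
  exact shannonEntropy_blockProb_le (blockProb_nonneg hp f) g

/-- The conditional entropy `H(B|A)` of a joint pmf `r` on `A × B`. -/
noncomputable def condEntropy (r : α × β → ℝ) : ℝ :=
  -∑ a, ∑ b, r (a, b) * Real.logb 2 (r (a, b) / ∑ b', r (a, b'))

lemma shannonEntropy_add_condEntropy {r : α × β → ℝ} (hr : ∀ x, 0 ≤ r x) :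
    shannonEntropy (fun a => ∑ b, r (a, b)) + condEntropy r = shannonEntropy r := by
  have hrow : ∀ a, ∑ b, r (a, b) * Real.logb 2 (r (a, b) / ∑ b', r (a, b')) =
      ∑ b, r (a, b) * Real.logb 2 (r (a, b)) -
        (∑ b, r (a, b)) * Real.logb 2 (∑ b, r (a, b)) :=
    fun a => sum_mul_logb_div_sum univ fun b _ => hr (a, b)
  simp only [shannonEntropy, condEntropy, hrow, sum_sub_distrib, Fintype.sum_prod_type]
  ring

lemma blockProb_map_fst_apply [DecidableEq β] [DecidableEq I] (r : α × β → ℝ) (f : α → I)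
    (i : I) (b : β) :
    blockProb r (fun x => (f x.1, x.2)) (i, b) = ∑ a with f a = i, r (a, b) := by
  rw [blockProb, Fintype.sum_prod_type, sum_filter]
  refine sum_congr rfl fun a _ => ?_
  rw [sum_eq_single b (fun b' _ hb' => by simp [hb']) (by simp)]
  simp

lemma condEntropy_le_condEntropy_blockProb [DecidableEq β] [Fintype I] [DecidableEq I]
    {r : α × β → ℝ} (hr : ∀ x, 0 ≤ r x) (f : α → I) :
    condEntropy r ≤ condEntropy (blockProb r (fun x => (f x.1, x.2))) := by
  have hmarg : ∀ i, ∑ b', ∑ a with f a = i, r (a, b') = ∑ a with f a = i, ∑ b', r (a, b') :=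
    fun i => sum_comm
  have hfiber : ∀ i b,
      (∑ a with f a = i, r (a, b)) *
          Real.logb 2 ((∑ a with f a = i, r (a, b)) / ∑ a with f a = i, ∑ b', r (a, b')) ≤
        ∑ a with f a = i, r (a, b) * Real.logb 2 (r (a, b) / ∑ b', r (a, b')) :=
    fun i b => sum_mul_logb_div_le one_lt_two _ (fun a _ => hr _)
      (fun a _ => sum_nonneg fun b' _ => hr _)
      (fun a _ h => h.trans_le (single_le_sum (fun b' _ => hr (a, b')) (mem_univ b)))
  simp only [condEntropy, blockProb_map_fst_apply, hmarg, neg_le_neg_iff]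
  calc _ ≤ ∑ i, ∑ b, ∑ a with f a = i, r (a, b) * Real.logb 2 (r (a, b) / ∑ b', r (a, b')) :=
        sum_le_sum fun i _ => sum_le_sum fun b _ => hfiber i b
    _ = _ := by
        rw [← sum_fiberwise univ f]
        exact sum_congr rfl fun i _ => sum_comm

lemma blockProb_map_snd_apply [DecidableEq α] [DecidableEq J] (p : α × β → ℝ) (g : β → J)
    (a : α) (j : J) :
    blockProb p (fun x => (x.1, g x.2)) (a, j) = ∑ b, if g b = j then p (a, b) else 0 := by
  rw [blockProb, Fintype.sum_prod_type, sum_eq_single a (fun a' _ ha' => by simp [ha']) (by simp)]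
  simp

lemma condSemEntropy_eq_condEntropy [DecidableEq α] [Fintype J] [DecidableEq J]
    (p : α × β → ℝ) (g : β → J) :
    condSemEntropy p g = condEntropy (blockProb p (fun x => (x.1, g x.2))) := by
  have hrow : ∀ a, ∑ b, p (a, b) = ∑ j, blockProb p (fun x => (x.1, g x.2)) (a, j) := fun a => by
    rw [sum_blockProb_prod, blockProb_fst]
  simp only [condSemEntropy, condEntropy, blockProb_map_snd_apply, hrow]

lemma shannonEntropy_add_condSemEntropy [DecidableEq α] [Fintype J] [DecidableEq J]
    {p : α × β → ℝ} (hp : ∀ x, 0 ≤ p x) (g : β → J) :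
    shannonEntropy (fun a => ∑ b, p (a, b)) + condSemEntropy p g =
      semEntropy p (fun x => (x.1, g x.2)) := by
  have hrow : (fun a => ∑ b, p (a, b)) =
      fun a => ∑ j, blockProb p (fun x => (x.1, g x.2)) (a, j) := funext fun a => by
    rw [sum_blockProb_prod, blockProb_fst]
  rw [condSemEntropy_eq_condEntropy, semEntropy_eq_shannonEntropy, hrow,
    shannonEntropy_add_condEntropy (blockProb_nonneg hp _)]

lemma semEntropy_add_condSemEntropy_le [Fintype I] [DecidableEq I] [Fintype J] [DecidableEq J]
    {p : α × β → ℝ} (hp : ∀ x, 0 ≤ p x) (f : α → I) (g : β → J) :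
    semEntropy (fun a => ∑ b, p (a, b)) f + condSemEntropy p g ≤
      semEntropy p (fun x => (f x.1, g x.2)) := by
  classical
  set r := blockProb p (fun x => (x.1, g x.2))
  set s := blockProb r (fun x => (f x.1, x.2))
  have hs : s = blockProb p (fun x => (f x.1, g x.2)) := (blockProb_comp _ _ _).symm
  have hmarg : (fun i => ∑ j, s (i, j)) = blockProb (fun a => ∑ b, p (a, b)) f := by
    ext i
    rw [hs, sum_blockProb_prod, ← funext (blockProb_fst p), ← blockProb_comp]
  calc semEntropy (fun a => ∑ b, p (a, b)) f + condSemEntropy p g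
      = shannonEntropy (fun i => ∑ j, s (i, j)) + condEntropy r := by
        rw [hmarg, condSemEntropy_eq_condEntropy, semEntropy_eq_shannonEntropy]
    _ ≤ shannonEntropy (fun i => ∑ j, s (i, j)) + condEntropy s := by
        gcongr
        exact condEntropy_le_condEntropy_blockProb (blockProb_nonneg hp _) f
    _ = shannonEntropy s :=
        shannonEntropy_add_condEntropy (blockProb_nonneg (blockProb_nonneg hp _) _)
    _ = semEntropy p (fun x => (f x.1, g x.2)) := by rw [hs, semEntropy_eq_shannonEntropy]

end Entropy

theorem semEntropy_chain_rule
    {U V I J : Type*} [Fintype U] [Fintype V] [Fintype I] [Fintype J]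
    [DecidableEq I] [DecidableEq J]
    (p : U × V → ℝ) (blkU : U → I) (blkV : V → J)
    (hp : ∀ x, 0 ≤ p x) :
    semEntropy (fun u => ∑ v : V, p (u, v)) blkU + condSemEntropy p blkV ≤
        semEntropy p (fun x => (blkU x.1, blkV x.2)) ∧
      semEntropy p (fun x => (blkU x.1, blkV x.2)) ≤
        shannonEntropy (fun v => ∑ u : U, p (u, v)) +
          condSemEntropy (fun x : V × U => p (x.2, x.1)) blkU ∧
      shannonEntropy (fun v => ∑ u : U, p (u, v)) +
          condSemEntropy (fun x : V × U => p (x.2, x.1)) blkU ≤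
        shannonEntropy p := by
  classical
  have hq : ∀ x : V × U, 0 ≤ p (x.2, x.1) := fun x => hp _
  refine ⟨semEntropy_add_condSemEntropy_le hp blkU blkV, ?_, ?_⟩ <;>
    rw [shannonEntropy_add_condSemEntropy hq blkU]
  · calc semEntropy p (fun x => (blkU x.1, blkV x.2))
        = semEntropy (fun x : V × U => p (x.2, x.1)) (fun x => (blkU x.2, blkV x.1)) :=
          (congrArg shannonEntropy (blockProb_comp_equiv (Equiv.prodComm V U) p _)).symm
      _ ≤ _ := semEntropy_comp_le hq (fun x => (x.1, blkU x.2)) fun y => (y.2, blkV y.1)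
  · calc semEntropy (fun x : V × U => p (x.2, x.1)) (fun x => (x.1, blkU x.2))
        ≤ shannonEntropy (fun x : V × U => p (x.2, x.1)) := shannonEntropy_blockProb_le hq _
      _ = shannonEntropy p := shannonEntropy_comp_equiv (Equiv.prodComm V U) p
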